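/- arXiv:1507.04797 — 5 statements merged into one kernel-verified Lean document; each statement's English description precedes it below -/
import Mathlib

section
/- Let A : ℝ≥0 → ℝ be right-continuous and nondecreasing with jumps ΔA ≥ 0, and decompose A = A^c + ΣΔA into its continuous part and jump part. Then the function G defined by G_t = 1 − (1−a)·exp(−∫_0^t dA^c)·∏_{s≤t}(1+ΔA_s)^{−1} solves the measure differential equation dG = (1−G) dA with initial condition G_{0−} = a; moreover any solution of this equation is monotone toward 1 and never crosses 1. -/
open MeasureTheory Set Filter Topology

/-!
Write `E t = exp (-(Ac t - Ac 0)) ∏_{0 ≤ s ≤ t} (1 + Δ s)⁻¹`, so that `G = 1 - (1 - a) E` and the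
equation for `G` reduces to `∫_{[0,t]} E dA = 1 - E t`. On an open interval `(u, v)` the mass
`m = A(v-) - A u` and the exponent `y` of `E u / E(v-)` agree to second order
(`m - m² ≤ y ≤ m`, from `x - x² ≤ log (1 + x) ≤ x`), and the atom at `v` contributes exactly
`Δ v · E v = E(v-) - E v`. So `t ↦ ∫_{[0,t]} E dA + E t` has increments `O(m²)`, hence is constant
(real induction), equal to its value `1` at `0`.

Solutions are unique: the difference `ψ` of two solutions satisfies `ψ t = -∫_{[0,t]} ψ dA`. At an
atom this gives `ψ t (1 + ΔA t) = 0`, and just to the right of a point up to which `ψ` vanishes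
`dA` has mass `< 1`, so `∫ |ψ| ≤ (mass) · ∫ |ψ|` there. Every solution is therefore `G`, which
moves monotonically toward `1` because `E` decreases.
-/

section Subtype

variable {α : Type*} {f : α → ℝ} {s t : Set α}

theorem Summable.subtype_mono (hf : Summable fun x : t => f x) (hst : s ⊆ t) :
    Summable fun x : s => f x :=
  hf.comp_injective (inclusion_injective hst)

theorem tsum_subtype_mono (hf0 : ∀ x, 0 ≤ f x) (hf : Summable fun x : t => f x) (hst : s ⊆ t) :
    ∑' x : s, f x ≤ ∑' x : t, f x :=
  Summable.tsum_le_tsum_of_inj (inclusion hst) (inclusion_injective hst) (fun c _ => hf0 c)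
    (fun _ => le_rfl) (hf.subtype_mono hst) hf

end Subtype

section Interval

variable {f : ℝ → ℝ} {a b c : ℝ}

theorem tsum_Icc_eq_tsum_Ico_add (hab : a ≤ b) (hf : Summable fun x : Icc a b => f x) :
    ∑' x : Icc a b, f x = ∑' x : Ico a b, f x + f b := by
  rw [← Ico_union_right hab, Summable.tsum_union_disjoint
    (disjoint_singleton_right.mpr right_notMem_Ico) (hf.subtype_mono Ico_subset_Icc_self)
    Summable.of_finite, tsum_singleton]

theorem tsum_Ico_eq_tsum_Icc_add_tsum_Ioo (hab : a ≤ b) (hbc : b < c)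
    (hf : Summable fun x : Ico a c => f x) :
    ∑' x : Ico a c, f x = ∑' x : Icc a b, f x + ∑' x : Ioo b c, f x := by
  rw [← Icc_union_Ioo_eq_Ico hab hbc] at hf ⊢
  exact Summable.tsum_union_disjoint (disjoint_left.mpr fun x hx hx' => hx'.1.not_ge hx.2)
    (hf.subtype_mono subset_union_left) (hf.subtype_mono subset_union_right)

variable {μ : Measure ℝ}

theorem setIntegral_Icc_eq_setIntegral_Ico_add (hab : a ≤ b) (hf : IntegrableOn f (Icc a b) μ) :
    ∫ x in Icc a b, f x ∂μ = ∫ x in Ico a b, f x ∂μ + μ.real {b} * f b := by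
  rw [← Ico_union_right hab, setIntegral_union (disjoint_singleton_right.mpr right_notMem_Ico)
    (measurableSet_singleton b) (hf.mono_set Ico_subset_Icc_self)
    (hf.mono_set (singleton_subset_iff.mpr (right_mem_Icc.mpr hab))), integral_singleton,
    smul_eq_mul]

theorem setIntegral_Ico_eq_setIntegral_Icc_add_setIntegral_Ioo (hab : a ≤ b) (hbc : b < c)
    (hf : IntegrableOn f (Ico a c) μ) :
    ∫ x in Ico a c, f x ∂μ = ∫ x in Icc a b, f x ∂μ + ∫ x in Ioo b c, f x ∂μ := by
  rw [← Icc_union_Ioo_eq_Ico hab hbc] at hf ⊢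
  exact setIntegral_union (disjoint_left.mpr fun x hx hx' => hx'.1.not_ge hx.2) measurableSet_Ioo
    hf.left_of_union hf.right_of_union

end Interval

theorem sub_sq_le_log_one_add {x : ℝ} (hx : 0 ≤ x) : x - x ^ 2 ≤ Real.log (1 + x) := by
  have hpos : 0 < 1 + x := by linarith
  have h := Real.one_sub_inv_le_log_of_pos hpos
  have : x - x ^ 2 ≤ 1 - (1 + x)⁻¹ := by
    rw [sub_le_sub_iff, inv_eq_one_div, ← sub_nonneg]
    field_simp
    nlinarith [pow_nonneg hx 3]
  linarith

theorem log_one_add_le_self {x : ℝ} (hx : 0 ≤ x) : Real.log (1 + x) ≤ x := by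
  linarith [Real.log_le_sub_one_of_pos (show 0 < 1 + x by linarith)]

theorem tsum_log_one_add_mem_Icc {ι : Type*} {f : ι → ℝ} (hf0 : ∀ i, 0 ≤ f i) (hf : Summable f) :
    ∑' i, Real.log (1 + f i) ∈ Icc (∑' i, f i - (∑' i, f i) ^ 2) (∑' i, f i) := by
  have hlog : Summable fun i => Real.log (1 + f i) :=
    Summable.of_nonneg_of_le (fun i => Real.log_nonneg (by linarith [hf0 i]))
      (fun i => log_one_add_le_self (hf0 i)) hf
  refine ⟨?_, Summable.tsum_le_tsum (fun i => log_one_add_le_self (hf0 i)) hlog hf⟩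
  calc ∑' i, f i - (∑' i, f i) ^ 2 = ∑' i, (1 - ∑' j, f j) * f i := by
        rw [tsum_mul_left]; ring
    _ ≤ ∑' i, Real.log (1 + f i) := by
        refine Summable.tsum_le_tsum (fun i => ?_) (hf.mul_left _) hlog
        have hfi : f i ≤ ∑' j, f j := hf.le_tsum i fun j _ => hf0 j
        nlinarith [sub_sq_le_log_one_add (hf0 i), mul_le_mul_of_nonneg_right hfi (hf0 i)]

theorem real_induction {P : ℝ → Prop} {a : ℝ}
    (hleft : ∀ x, a ≤ x → (∀ y ∈ Ico a x, P y) → P x)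
    (hright : ∀ x, a ≤ x → (∀ y ∈ Icc a x, P y) → ∀ᶠ y in 𝓝[>] x, P y) :
    ∀ x, a ≤ x → P x := by
  by_contra! ⟨b, hab, hb⟩
  set B := {x | a ≤ x ∧ ¬P x}
  have hB : B.Nonempty := ⟨b, hab, hb⟩
  have hac : a ≤ sInf B := le_csInf hB fun x hx => hx.1
  have hbdd : BddBelow B := ⟨a, fun x hx => hx.1⟩
  have hbelow : ∀ y ∈ Ico a (sInf B), P y := fun y hy =>
    by_contra fun hPy => (csInf_le hbdd ⟨hy.1, hPy⟩).not_gt hy.2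
  have hc : P (sInf B) := hleft _ hac hbelow
  obtain ⟨z, hcz, hz⟩ := mem_nhdsGT_iff_exists_Ioo_subset.mp <| hright _ hac fun y hy =>
    hy.2.lt_or_eq.elim (fun h => hbelow y ⟨hy.1, h⟩) fun h => h ▸ hc
  have : z ≤ sInf B := le_csInf hB fun x hx => by
    by_contra! hxz
    have hcx : sInf B < x :=
      (csInf_le hbdd hx).lt_of_ne fun h => hx.2 (h ▸ hc)
    exact hx.2 (hz ⟨hcx, hxz⟩)
  exact (mem_Ioi.mp hcz).not_ge this

namespace StieltjesFunction

variable (A : StieltjesFunction ℝ)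

theorem measureReal_Ioc_eq {u v : ℝ} (huv : u ≤ v) : A.measure.real (Ioc u v) = A v - A u := by
  rw [measureReal_def, A.measure_Ioc, ENNReal.toReal_ofReal (sub_nonneg.mpr (A.mono huv))]

theorem measureReal_Ioo_le {u v : ℝ} (huv : u ≤ v) : A.measure.real (Ioo u v) ≤ A v - A u :=
  A.measureReal_Ioc_eq huv ▸ measureReal_mono Ioo_subset_Ioc_self measure_Ioc_lt_top.ne

theorem tendsto_measureReal_Ioo_nhdsLT (x : ℝ) :
    Tendsto (fun u => A.measure.real (Ioo u x)) (𝓝[<] x) (𝓝 0) := by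
  have h : Tendsto (fun u => Function.leftLim A x - A u) (𝓝[<] x) (𝓝 0) := by
    simpa using (A.mono.tendsto_leftLim x).const_sub (Function.leftLim A x)
  refine h.congr' (eventually_nhdsWithin_of_forall fun u hu => Eq.symm ?_)
  show A.measure.real (Ioo u x) = _
  rw [measureReal_def, A.measure_Ioo,
    ENNReal.toReal_ofReal (sub_nonneg.mpr (A.mono.le_leftLim (mem_Iio.mp hu)))]

theorem tendsto_measureReal_Ioc_nhdsGT (x : ℝ) :
    Tendsto (fun v => A.measure.real (Ioc x v)) (𝓝[>] x) (𝓝 0) := by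
  have h : Tendsto (fun v => A v - A x) (𝓝[>] x) (𝓝 0) := by
    simpa using ((A.right_continuous x).tendsto.mono_left
      (nhdsWithin_mono x Ioi_subset_Ici_self)).sub_const (A x)
  exact h.congr' (eventually_nhdsWithin_of_forall fun v hv =>
    (A.measureReal_Ioc_eq (mem_Ioi.mp hv).le).symm)

theorem tendsto_measureReal_Ioo_nhdsGT (x : ℝ) :
    Tendsto (fun v => A.measure.real (Ioo x v)) (𝓝[>] x) (𝓝 0) :=
  squeeze_zero (fun _ => measureReal_nonneg)
    (fun _ => measureReal_mono Ioo_subset_Ioc_self measure_Ioc_lt_top.ne)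
    (A.tendsto_measureReal_Ioc_nhdsGT x)

theorem abs_sub_le_of_abs_sub_le_mul_measureReal_Ioo_sq {F : ℝ → ℝ} {a K η : ℝ} (hη : 0 < η)
    (hF : ∀ u v, a ≤ u → u < v → |F v - F u| ≤ K * A.measure.real (Ioo u v) ^ 2) :
    ∀ x, a ≤ x → |F x - F a| ≤ η * (A x - A a) := by
  have hstep : ∀ u v, a ≤ u → u < v → |F u - F a| ≤ η * (A u - A a) →
      K * A.measure.real (Ioo u v) < η → |F v - F a| ≤ η * (A v - A a) := by
    intro u v hau huv hu hK
    have hm := A.measureReal_Ioo_le huv.le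
    have hm0 : 0 ≤ A.measure.real (Ioo u v) := measureReal_nonneg
    calc |F v - F a| ≤ |F u - F a| + |F v - F u| := by
          simpa using abs_add_le (F u - F a) (F v - F u)
      _ ≤ η * (A u - A a) + (K * A.measure.real (Ioo u v)) * A.measure.real (Ioo u v) := by
          gcongr
          linarith [hF u v hau huv]
      _ ≤ η * (A u - A a) + η * (A v - A u) := by
          nlinarith [mul_le_mul_of_nonneg_right hK.le hm0, mul_le_mul_of_nonneg_left hm hη.le]
      _ = η * (A v - A a) := by ring
  refine real_induction (fun x hax hbelow => ?_) (fun x hax hupto => ?_)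
  · rcases hax.eq_or_lt with rfl | hax
    · simp
    have hev : ∀ᶠ u in 𝓝[<] x, u ∈ Ioo a x ∧ K * A.measure.real (Ioo u x) < η :=
      Filter.Eventually.and (Ioo_mem_nhdsLT hax) <|
        ((A.tendsto_measureReal_Ioo_nhdsLT x).const_mul K).eventually_lt_const (by simpa using hη)
    obtain ⟨u, hu, hKu⟩ := hev.exists
    exact hstep u x hu.1.le hu.2 (hbelow u ⟨hu.1.le, hu.2⟩) hKu
  · have hev : ∀ᶠ v in 𝓝[>] x, x < v ∧ K * A.measure.real (Ioo x v) < η :=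
      Filter.Eventually.and self_mem_nhdsWithin <|
        ((A.tendsto_measureReal_Ioo_nhdsGT x).const_mul K).eventually_lt_const (by simpa using hη)
    exact hev.mono fun v hv => hstep x v hax hv.1 (hupto x ⟨hax, le_rfl⟩) hv.2

theorem eq_of_abs_sub_le_mul_measureReal_Ioo_sq {F : ℝ → ℝ} {a K : ℝ}
    (hF : ∀ u v, a ≤ u → u < v → |F v - F u| ≤ K * A.measure.real (Ioo u v) ^ 2) :
    ∀ x, a ≤ x → F x = F a := by
  intro x hax
  have hlim : Tendsto (fun η : ℝ => η * (A x - A a)) (𝓝[>] 0) (𝓝 0) := by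
    simpa using ((continuous_mul_const (A x - A a)).tendsto 0).mono_left nhdsWithin_le_nhds
  have hle := ge_of_tendsto hlim <| eventually_nhdsWithin_of_forall fun η hη =>
    A.abs_sub_le_of_abs_sub_le_mul_measureReal_Ioo_sq hη hF x hax
  exact sub_eq_zero.mp (abs_nonpos_iff.mp hle)

end StieltjesFunction

theorem exp_neg_le_one_sub_add_sq {y : ℝ} (hy : 0 ≤ y) : Real.exp (-y) ≤ 1 - y + y ^ 2 := by
  have hpos : 0 < 1 + y := by linarith
  calc Real.exp (-y) ≤ (1 + y)⁻¹ := by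
        rw [Real.exp_neg]; exact inv_anti₀ hpos (by linarith [Real.add_one_le_exp y])
    _ ≤ 1 - y + y ^ 2 := by
        rw [inv_le_iff_one_le_mul₀ hpos]; nlinarith [pow_nonneg hy 3]

/-- One-step error between `∫ E dA` over an interval of mass `m` and the drop `E - E e^{-y}`, when
`y` agrees with `m` to second order. -/
theorem abs_sub_sub_mul_exp_le {E I m y : ℝ} (hE : 0 ≤ E) (hy : 0 ≤ y) (hym : y ≤ m)
    (hmy : m - m ^ 2 ≤ y) (hlow : E * Real.exp (-y) * m ≤ I) (hup : I ≤ E * m) :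
    |I - (E - E * Real.exp (-y))| ≤ 2 * E * m ^ 2 := by
  have h1 := Real.one_sub_le_exp_neg y
  have h2 := exp_neg_le_one_sub_add_sq hy
  have hm : 0 ≤ m := hy.trans hym
  rw [abs_le]
  constructor
  · nlinarith [mul_nonneg (mul_nonneg hE (sub_nonneg.mpr h1)) (by linarith : (0:ℝ) ≤ 1 + m),
      mul_nonneg hE (sub_nonneg.mpr hym), mul_nonneg (mul_nonneg hE hm) (sub_nonneg.mpr hym)]
  · nlinarith [mul_le_mul_of_nonneg_left h2 hE, mul_nonneg hE (sub_nonneg.mpr hmy),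
      mul_nonneg hE (mul_nonneg (sub_nonneg.mpr hym) (add_nonneg hm hy))]

structure IsJumpDecomposition (A : StieltjesFunction ℝ) (Ac Δ : ℝ → ℝ) : Prop where
  monotone_cont : Monotone Ac
  jump_eq : ∀ s, Δ s = A s - Function.leftLim A s
  summable_jump : ∀ t, Summable fun s : Icc (0:ℝ) t => Δ s
  eq_add_tsum_jump : ∀ t, 0 ≤ t → A t = Ac t + ∑' s : Icc (0:ℝ) t, Δ s

/-- `exp (-(Ac t - Ac 0)) * ∏_{0 ≤ s ≤ t} (1 + Δ s)⁻¹`, with the product written as the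
exponential of a sum of logarithms. -/
noncomputable def survival (Ac Δ : ℝ → ℝ) (t : ℝ) : ℝ :=
  Real.exp (-(Ac t - Ac 0 + ∑' s : Icc (0:ℝ) t, Real.log (1 + Δ s)))

/-- `survival` just before `t`: the jump at `t` is left out of the product. -/
noncomputable def survivalLeft (Ac Δ : ℝ → ℝ) (t : ℝ) : ℝ :=
  Real.exp (-(Ac t - Ac 0 + ∑' s : Ico (0:ℝ) t, Real.log (1 + Δ s)))

theorem survival_pos (Ac Δ : ℝ → ℝ) (t : ℝ) : 0 < survival Ac Δ t := Real.exp_pos _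

theorem survivalLeft_zero (Ac Δ : ℝ → ℝ) : survivalLeft Ac Δ 0 = 1 := by
  simp [survivalLeft]

namespace IsJumpDecomposition

variable {A : StieltjesFunction ℝ} {Ac Δ : ℝ → ℝ} {S : Set ℝ} {s t u v : ℝ}

theorem jump_nonneg (h : IsJumpDecomposition A Ac Δ) (s : ℝ) : 0 ≤ Δ s := by
  rw [h.jump_eq]
  exact sub_nonneg.mpr (A.mono.leftLim_le le_rfl)

theorem log_one_add_jump_nonneg (h : IsJumpDecomposition A Ac Δ) (s : ℝ) :
    0 ≤ Real.log (1 + Δ s) :=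
  Real.log_nonneg (by linarith [h.jump_nonneg s])

theorem summable_jump_of_subset (h : IsJumpDecomposition A Ac Δ) (hS : S ⊆ Icc 0 t) :
    Summable fun s : S => Δ s :=
  (h.summable_jump t).subtype_mono hS

theorem summable_log_of_subset (h : IsJumpDecomposition A Ac Δ) (hS : S ⊆ Icc 0 t) :
    Summable fun s : S => Real.log (1 + Δ s) :=
  Summable.of_nonneg_of_le (fun s => h.log_one_add_jump_nonneg s)
    (fun s => log_one_add_le_self (h.jump_nonneg s)) (h.summable_jump_of_subset hS)

theorem survival_eq (h : IsJumpDecomposition A Ac Δ) (t : ℝ) :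
    survival Ac Δ t = Real.exp (-(Ac t - Ac 0)) * ∏' s : Icc (0:ℝ) t, (1 + Δ s)⁻¹ := by
  have hpos : ∀ s, 0 < 1 + Δ s := fun s => by linarith [h.jump_nonneg s]
  rw [← Real.rexp_tsum_eq_tprod (fun s : Icc (0:ℝ) t => inv_pos.mpr (hpos s)), survival,
    ← Real.exp_add]
  · simp only [Real.log_inv, tsum_neg]
    ring_nf
  · simpa only [Real.log_inv] using (h.summable_log_of_subset subset_rfl).neg

theorem survival_antitone (h : IsJumpDecomposition A Ac Δ) : Antitone (survival Ac Δ) :=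
  fun _ _ huv => Real.exp_le_exp.mpr <| neg_le_neg <|
    add_le_add (sub_le_sub_right (h.monotone_cont huv) _)
      (tsum_subtype_mono h.log_one_add_jump_nonneg (h.summable_log_of_subset subset_rfl)
        (Icc_subset_Icc_right huv))

theorem survival_le_one (h : IsJumpDecomposition A Ac Δ) (ht : 0 ≤ t) : survival Ac Δ t ≤ 1 :=
  Real.exp_le_one_iff.mpr <| neg_nonpos.mpr <|
    add_nonneg (sub_nonneg.mpr (h.monotone_cont ht))
      (tsum_nonneg fun s => h.log_one_add_jump_nonneg s)

theorem survival_mul_one_add_jump (h : IsJumpDecomposition A Ac Δ) (ht : 0 ≤ t) :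
    survival Ac Δ t * (1 + Δ t) = survivalLeft Ac Δ t := by
  have hpos : 0 < 1 + Δ t := by linarith [h.jump_nonneg t]
  rw [survival, survivalLeft, tsum_Icc_eq_tsum_Ico_add (f := fun s => Real.log (1 + Δ s)) ht
    (h.summable_log_of_subset subset_rfl), ← add_assoc, neg_add, Real.exp_add,
    Real.exp_neg (Real.log _), Real.exp_log hpos, mul_assoc, inv_mul_cancel₀ hpos.ne', mul_one]

theorem survivalLeft_eq (h : IsJumpDecomposition A Ac Δ) (hu : 0 ≤ u) (huv : u < v) :
    survivalLeft Ac Δ v =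
      survival Ac Δ u * Real.exp (-(Ac v - Ac u + ∑' s : Ioo u v, Real.log (1 + Δ s))) := by
  rw [survivalLeft, survival, tsum_Ico_eq_tsum_Icc_add_tsum_Ioo (f := fun s => Real.log (1 + Δ s))
    hu huv (h.summable_log_of_subset Ico_subset_Icc_self), ← Real.exp_add]
  congr 1
  ring

theorem survivalLeft_le_survival (h : IsJumpDecomposition A Ac Δ) (hsv : s < v) :
    survivalLeft Ac Δ v ≤ survival Ac Δ s :=
  Real.exp_le_exp.mpr <| neg_le_neg <|
    add_le_add (sub_le_sub_right (h.monotone_cont hsv.le) _)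
      (tsum_subtype_mono h.log_one_add_jump_nonneg (h.summable_log_of_subset Ico_subset_Icc_self)
        (Icc_subset_Ico_right hsv))

theorem measureReal_singleton (h : IsJumpDecomposition A Ac Δ) (s : ℝ) :
    A.measure.real {s} = Δ s := by
  rw [measureReal_def, A.measure_singleton, ← h.jump_eq, ENNReal.toReal_ofReal (h.jump_nonneg s)]

theorem measureReal_Ioo (h : IsJumpDecomposition A Ac Δ) (hu : 0 ≤ u) (huv : u < v) :
    A.measure.real (Ioo u v) = Ac v - Ac u + ∑' s : Ioo u v, Δ s := by
  have hIcc := tsum_Icc_eq_tsum_Ico_add (f := Δ) (hu.trans huv.le) (h.summable_jump v)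
  have hIco := tsum_Ico_eq_tsum_Icc_add_tsum_Ioo (f := Δ) hu huv
    (h.summable_jump_of_subset Ico_subset_Icc_self)
  rw [measureReal_def, A.measure_Ioo,
    ENNReal.toReal_ofReal (sub_nonneg.mpr (A.mono.le_leftLim huv))]
  linarith [h.jump_eq v, h.eq_add_tsum_jump v (hu.trans huv.le), h.eq_add_tsum_jump u hu]

theorem integrableOn_survival (h : IsJumpDecomposition A Ac Δ) (u v : ℝ) :
    IntegrableOn (survival Ac Δ) (Icc u v) A.measure :=
  h.survival_antitone.locallyIntegrable.integrableOn_isCompact isCompact_Icc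

theorem exponent_mem_Icc (h : IsJumpDecomposition A Ac Δ) (hu : 0 ≤ u) (huv : u < v) :
    Ac v - Ac u + ∑' s : Ioo u v, Real.log (1 + Δ s) ∈
      Icc (A.measure.real (Ioo u v) - A.measure.real (Ioo u v) ^ 2) (A.measure.real (Ioo u v)) := by
  have hc : 0 ≤ Ac v - Ac u := sub_nonneg.mpr (h.monotone_cont huv.le)
  have hD : 0 ≤ ∑' s : Ioo u v, Δ s := tsum_nonneg fun s => h.jump_nonneg s
  obtain ⟨hlow, hup⟩ := tsum_log_one_add_mem_Icc (fun s : Ioo u v => h.jump_nonneg s)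
    (h.summable_jump_of_subset fun s hs => ⟨hu.trans hs.1.le, hs.2.le⟩)
  rw [h.measureReal_Ioo hu huv]
  constructor <;> nlinarith

theorem setIntegral_Ioo_survival_mem_Icc (h : IsJumpDecomposition A Ac Δ) (u v : ℝ) :
    ∫ s in Ioo u v, survival Ac Δ s ∂A.measure ∈
      Icc (survivalLeft Ac Δ v * A.measure.real (Ioo u v))
        (survival Ac Δ u * A.measure.real (Ioo u v)) := by
  have hint : IntegrableOn (survival Ac Δ) (Ioo u v) A.measure :=
    (h.integrableOn_survival u v).mono_set Ioo_subset_Icc_self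
  refine ⟨setIntegral_ge_of_const_le_real measurableSet_Ioo measure_Ioo_lt_top.ne
    (fun s hs => h.survivalLeft_le_survival hs.2) hint, ?_⟩
  calc ∫ s in Ioo u v, survival Ac Δ s ∂A.measure ≤ ∫ _ in Ioo u v, survival Ac Δ u ∂A.measure :=
        setIntegral_mono_on hint (integrableOn_const measure_Ioo_lt_top.ne) measurableSet_Ioo
          fun s hs => h.survival_antitone hs.1.le
    _ = survival Ac Δ u * A.measure.real (Ioo u v) := by
        rw [setIntegral_const, smul_eq_mul, mul_comm]

theorem abs_sub_le_measureReal_Ioo_sq (h : IsJumpDecomposition A Ac Δ) (hu : 0 ≤ u)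
    (huv : u < v) :
    |(∫ s in Icc 0 v, survival Ac Δ s ∂A.measure + survival Ac Δ v) -
        (∫ s in Icc 0 u, survival Ac Δ s ∂A.measure + survival Ac Δ u)| ≤
      2 * A.measure.real (Ioo u v) ^ 2 := by
  set E := survival Ac Δ
  set m := A.measure.real (Ioo u v)
  set y := Ac v - Ac u + ∑' s : Ioo u v, Real.log (1 + Δ s)
  have hint := h.integrableOn_survival 0 v
  have hsplit : ∫ s in Icc 0 v, E s ∂A.measure =
      ∫ s in Icc 0 u, E s ∂A.measure + ∫ s in Ioo u v, E s ∂A.measure + Δ v * E v := by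
    rw [setIntegral_Icc_eq_setIntegral_Ico_add (hu.trans huv.le) hint,
      setIntegral_Ico_eq_setIntegral_Icc_add_setIntegral_Ioo hu huv
        (hint.mono_set Ico_subset_Icc_self), h.measureReal_singleton]
  have hleft : survivalLeft Ac Δ v = E u * Real.exp (-y) := h.survivalLeft_eq hu huv
  have hEv : E v * (1 + Δ v) = survivalLeft Ac Δ v := h.survival_mul_one_add_jump (hu.trans huv.le)
  have hy0 : 0 ≤ y := add_nonneg (sub_nonneg.mpr (h.monotone_cont huv.le))
    (tsum_nonneg fun s => h.log_one_add_jump_nonneg s)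
  obtain ⟨hmy, hym⟩ := h.exponent_mem_Icc hu huv
  obtain ⟨hlow, hup⟩ := h.setIntegral_Ioo_survival_mem_Icc u v
  rw [hleft] at hlow
  calc _ = |∫ s in Ioo u v, E s ∂A.measure - (E u - E u * Real.exp (-y))| := by
        congr 1
        linarith
    _ ≤ 2 * E u * m ^ 2 := abs_sub_sub_mul_exp_le (survival_pos Ac Δ u).le hy0 hym hmy hlow hup
    _ ≤ 2 * m ^ 2 := by nlinarith [h.survival_le_one hu, sq_nonneg m]

theorem setIntegral_survival (h : IsJumpDecomposition A Ac Δ) (ht : 0 ≤ t) :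
    ∫ s in Icc 0 t, survival Ac Δ s ∂A.measure = 1 - survival Ac Δ t := by
  have hconst := A.eq_of_abs_sub_le_mul_measureReal_Ioo_sq
    (F := fun v => ∫ s in Icc 0 v, survival Ac Δ s ∂A.measure + survival Ac Δ v)
    (fun u v hu huv => h.abs_sub_le_measureReal_Ioo_sq hu huv) t ht
  have hzero : ∫ s in Icc 0 0, survival Ac Δ s ∂A.measure + survival Ac Δ 0 = 1 := by
    rw [Icc_self, integral_singleton, h.measureReal_singleton, smul_eq_mul,
      ← survivalLeft_zero Ac Δ, ← h.survival_mul_one_add_jump le_rfl]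
    ring
  linarith

end IsJumpDecomposition

def SolvesIntegralEq (μ : Measure ℝ) (a : ℝ) (G : ℝ → ℝ) : Prop :=
  ∀ t, 0 ≤ t → G t = a + ∫ s in Icc 0 t, (1 - G s) ∂μ

namespace IsJumpDecomposition

variable {A : StieltjesFunction ℝ} {Ac Δ : ℝ → ℝ} {a : ℝ} {G : ℝ → ℝ}

theorem solvesIntegralEq (h : IsJumpDecomposition A Ac Δ)
    (hG : ∀ t, 0 ≤ t → G t = 1 - (1 - a) * survival Ac Δ t) : SolvesIntegralEq A.measure a G := by
  intro t ht
  have hEq : EqOn (fun s => 1 - G s) (fun s => (1 - a) * survival Ac Δ s) (Icc 0 t) :=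
    fun s hs => by simp only [hG s hs.1]; ring
  rw [setIntegral_congr_fun measurableSet_Icc hEq, integral_const_mul, h.setIntegral_survival ht,
    hG t ht]
  ring

theorem integrableOn_one_sub (h : IsJumpDecomposition A Ac Δ)
    (hG : ∀ t, 0 ≤ t → G t = 1 - (1 - a) * survival Ac Δ t) (t : ℝ) :
    IntegrableOn (fun s => 1 - G s) (Icc 0 t) A.measure :=
  IntegrableOn.congr_fun ((h.integrableOn_survival 0 t).const_mul (1 - a))
    (fun s hs => by simp only [hG s hs.1]; ring) measurableSet_Icc

end IsJumpDecomposition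

theorem eq_zero_of_abs_le_setIntegral_abs {α : Type*} [MeasurableSpace α] {μ : Measure α}
    {ψ : α → ℝ} {S : Set α} (hSm : MeasurableSet S) (hS : μ S < 1) (hψ : IntegrableOn ψ S μ)
    (hle : ∀ y ∈ S, |ψ y| ≤ ∫ x in S, |ψ x| ∂μ) : ∀ y ∈ S, ψ y = 0 := by
  set I := ∫ x in S, |ψ x| ∂μ
  have hS1 : μ.real S < 1 := by
    rw [← ENNReal.ofReal_lt_one, ofReal_measureReal (hS.trans ENNReal.one_lt_top).ne]
    exact hS
  have hI : I ≤ μ.real S * I :=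
    calc I ≤ ∫ _ in S, I ∂μ :=
          setIntegral_mono_on hψ.abs (integrableOn_const (hS.trans ENNReal.one_lt_top).ne) hSm hle
      _ = μ.real S * I := by rw [setIntegral_const, smul_eq_mul]
  have hI0 : I ≤ 0 := by
    nlinarith [setIntegral_nonneg (μ := μ) hSm fun x _ => abs_nonneg (ψ x),
      measureReal_nonneg (μ := μ) (s := S)]
  exact fun y hy => abs_nonpos_iff.mp ((hle y hy).trans hI0)

namespace SolvesIntegralEq

variable {μ : Measure ℝ} {a x : ℝ} {G H : ℝ → ℝ}

theorem eq_of_eqOn_Ico [IsFiniteMeasureOnCompacts μ] (hG : SolvesIntegralEq μ a G)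
    (hH : SolvesIntegralEq μ a H) (hGint : IntegrableOn (fun s => 1 - G s) (Icc 0 x) μ)
    (hx : 0 ≤ x) (heq : EqOn H G (Ico 0 x)) : H x = G x := by
  have hHint : IntegrableOn (fun s => 1 - H s) (Icc 0 x) μ := by
    rw [← Ico_union_right hx]
    exact ((hGint.mono_set Ico_subset_Icc_self).congr_fun (fun s hs => by rw [heq hs])
      measurableSet_Ico).union
      (integrableOn_singleton (hx := isCompact_singleton.measure_lt_top))
  have hIco : ∫ s in Ico 0 x, (1 - H s) ∂μ = ∫ s in Ico 0 x, (1 - G s) ∂μ :=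
    setIntegral_congr_fun measurableSet_Ico fun s hs => by rw [heq hs]
  have hHx := hH x hx
  have hGx := hG x hx
  rw [setIntegral_Icc_eq_setIntegral_Ico_add hx hHint, hIco] at hHx
  rw [setIntegral_Icc_eq_setIntegral_Ico_add hx hGint] at hGx
  have hprod : (H x - G x) * (1 + μ.real {x}) = 0 := by linear_combination hHx - hGx
  have hpos : 0 < 1 + μ.real {x} := by linarith [measureReal_nonneg (μ := μ) (s := {x})]
  exact sub_eq_zero.mp ((mul_eq_zero.mp hprod).resolve_right hpos.ne')

/-- Where `1 - H` is not integrable the integral in the equation is `0`; if that happened on every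
`[0, z]` with `z > x`, then `H = a` on `(x, ∞)` and `1 - H` would be integrable after all. -/
theorem exists_integrableOn [IsFiniteMeasureOnCompacts μ] (hH : SolvesIntegralEq μ a H)
    (hGint : IntegrableOn (fun s => 1 - G s) (Icc 0 x) μ) (hx : 0 ≤ x) (heq : EqOn H G (Icc 0 x)) :
    ∃ z > x, IntegrableOn (fun s => 1 - H s) (Icc 0 z) μ := by
  by_contra! hnot
  have hconst : ∀ z ∈ Ioc x (x + 1), 1 - a = 1 - H z := fun z hz => by
    rw [hH z (hx.trans hz.1.le), integral_undef (hnot z hz.1), add_zero]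
  refine hnot (x + 1) (by linarith) ?_
  rw [← Icc_union_Ioc_eq_Icc hx (by linarith)]
  exact (hGint.congr_fun (fun s hs => by rw [heq hs]) measurableSet_Icc).union
    ((integrableOn_const measure_Ioc_lt_top.ne).congr_fun hconst measurableSet_Ioc)

theorem eventually_eq_of_eqOn_Icc {A : StieltjesFunction ℝ} (hG : SolvesIntegralEq A.measure a G)
    (hH : SolvesIntegralEq A.measure a H)
    (hGint : ∀ t, 0 ≤ t → IntegrableOn (fun s => 1 - G s) (Icc 0 t) A.measure) (hx : 0 ≤ x)
    (heq : EqOn H G (Icc 0 x)) : ∀ᶠ y in 𝓝[>] x, H y = G y := by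
  obtain ⟨z, hxz, hHint⟩ := hH.exists_integrableOn (hGint x hx) hx heq
  obtain ⟨w, ⟨hxw, hwz⟩, hw⟩ := (Filter.Eventually.and (Ioo_mem_nhdsGT hxz)
    ((A.tendsto_measureReal_Ioc_nhdsGT x).eventually_lt_const one_pos)).exists
  have hw1 : A.measure (Ioc x w) < 1 := by
    rwa [← ofReal_measureReal measure_Ioc_lt_top.ne, ENNReal.ofReal_lt_one]
  set ψ := fun s => (1 - G s) - (1 - H s)
  have hψint : IntegrableOn ψ (Icc 0 w) A.measure :=
    (hGint w (hx.trans hxw.le)).sub (hHint.mono_set (Icc_subset_Icc_right hwz.le))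
  have hψ_eq : ∀ y ∈ Ioc x w, ψ y = -∫ s in Icc 0 y, ψ s ∂A.measure := by
    intro y hy
    have hy0 : 0 ≤ y := hx.trans hy.1.le
    rw [integral_sub (hGint y hy0) (hHint.mono_set (Icc_subset_Icc_right (hy.2.trans hwz.le)))]
    linarith [hG y hy0, hH y hy0]
  have hψ_Ioc : ∫ s in Icc 0 w, |ψ s| ∂A.measure = ∫ s in Ioc x w, |ψ s| ∂A.measure :=
    setIntegral_eq_of_subset_of_forall_sdiff_eq_zero measurableSet_Icc
      (fun s hs => ⟨hx.trans hs.1.le, hs.2⟩) fun s hs => by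
        have hsx : s ≤ x := not_lt.mp fun h => hs.2 ⟨h, hs.1.2⟩
        simp [ψ, heq ⟨hs.1.1, hsx⟩]
  have hbound : ∀ y ∈ Ioc x w, |ψ y| ≤ ∫ s in Ioc x w, |ψ s| ∂A.measure := fun y hy =>
    calc |ψ y| = |∫ s in Icc 0 y, ψ s ∂A.measure| := by rw [hψ_eq y hy, abs_neg]
      _ ≤ ∫ s in Icc 0 y, |ψ s| ∂A.measure := abs_integral_le_integral_abs
      _ ≤ ∫ s in Icc 0 w, |ψ s| ∂A.measure :=
          setIntegral_mono_set hψint.abs (ae_of_all _ fun s => abs_nonneg _)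
            (Icc_subset_Icc_right hy.2).eventuallyLE
      _ = ∫ s in Ioc x w, |ψ s| ∂A.measure := hψ_Ioc
  have hzero := eq_zero_of_abs_le_setIntegral_abs measurableSet_Ioc hw1
    (hψint.mono_set fun s hs => ⟨hx.trans hs.1.le, hs.2⟩) hbound
  filter_upwards [Ioc_mem_nhdsGT hxw] with y hy
  linarith [hzero y hy]

theorem eq_of_integrableOn {A : StieltjesFunction ℝ} (hG : SolvesIntegralEq A.measure a G)
    (hGint : ∀ t, 0 ≤ t → IntegrableOn (fun s => 1 - G s) (Icc 0 t) A.measure)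
    (hH : SolvesIntegralEq A.measure a H) : ∀ t, 0 ≤ t → H t = G t :=
  real_induction (fun x hx hbelow => hG.eq_of_eqOn_Ico hH (hGint x hx) hx fun y hy => hbelow y hy)
    fun _ hx hupto => hG.eventually_eq_of_eqOn_Icc hH hGint hx fun y hy => hupto y hy

end SolvesIntegralEq

theorem solves_dG_eq_one_sub_G_dA_general (A : StieltjesFunction ℝ) (a : ℝ)
    (Ac : ℝ → ℝ) (hAcm : Monotone Ac)
    (Δ : ℝ → ℝ) (hΔ : ∀ s, Δ s = A s - Function.leftLim A s)
    (hsum : ∀ t, Summable fun s : Icc (0:ℝ) t => Δ s)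
    (hdec : ∀ t, 0 ≤ t → A t = Ac t + ∑' s : Icc (0:ℝ) t, Δ s)
    (G : ℝ → ℝ)
    (hG : ∀ t, 0 ≤ t →
      G t = 1 - (1 - a) * Real.exp (-(Ac t - Ac 0)) * ∏' s : Icc (0:ℝ) t, (1 + Δ s)⁻¹) :
    (∀ t, 0 ≤ t → G t = a + ∫ s in Icc 0 t, (1 - G s) ∂A.measure) ∧
    (∀ H : ℝ → ℝ,
      (∀ t, 0 ≤ t → H t = a + ∫ s in Icc 0 t, (1 - H s) ∂A.measure) →
      ((a ≤ 1 → MonotoneOn H (Ici 0) ∧ ∀ t, 0 ≤ t → H t ≤ 1) ∧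
       (1 ≤ a → AntitoneOn H (Ici 0) ∧ ∀ t, 0 ≤ t → 1 ≤ H t))) := by
  have hA : IsJumpDecomposition A Ac Δ := ⟨hAcm, hΔ, hsum, hdec⟩
  have hGE : ∀ t, 0 ≤ t → G t = 1 - (1 - a) * survival Ac Δ t := fun t ht => by
    rw [hG t ht, hA.survival_eq, mul_assoc]
  have hGsol : SolvesIntegralEq A.measure a G := hA.solvesIntegralEq hGE
  refine ⟨hGsol, fun H hH => ?_⟩
  have hHE : ∀ t, 0 ≤ t → H t = 1 - (1 - a) * survival Ac Δ t := fun t ht =>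
    (hGsol.eq_of_integrableOn (fun t _ => hA.integrableOn_one_sub hGE t) hH t ht).trans (hGE t ht)
  refine ⟨fun ha => ⟨fun x hx y hy hxy => ?_, fun t ht => ?_⟩,
    fun ha => ⟨fun x hx y hy hxy => ?_, fun t ht => ?_⟩⟩
  · rw [hHE x hx, hHE y hy]; nlinarith [hA.survival_antitone hxy]
  · rw [hHE t ht]; nlinarith [survival_pos Ac Δ t]
  · rw [hHE x hx, hHE y hy]; nlinarith [hA.survival_antitone hxy]
  · rw [hHE t ht]; nlinarith [survival_pos Ac Δ t]

/-- The explicit exponential/product formula solves the measure differential equation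
`dG = (1 - G) dA` with initial condition `G_{0-} = a`, and any solution of this equation is
monotone towards, and never crosses, `1`. -/
theorem solves_dG_eq_one_sub_G_dA (A : StieltjesFunction ℝ) (a : ℝ)
    (Ac : ℝ → ℝ) (hAcc : Continuous Ac) (hAcm : Monotone Ac)
    (Δ : ℝ → ℝ) (hΔ : ∀ s, Δ s = A s - Function.leftLim A s)
    (hΔnn : ∀ s, 0 ≤ Δ s)
    (hsum : ∀ t, Summable fun s : Icc (0:ℝ) t => Δ s)
    (hdec : ∀ t, 0 ≤ t → A t = Ac t + ∑' s : Icc (0:ℝ) t, Δ s)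
    (G : ℝ → ℝ)
    (hG : ∀ t, 0 ≤ t →
      G t = 1 - (1 - a) * Real.exp (-(Ac t - Ac 0)) * ∏' s : Icc (0:ℝ) t, (1 + Δ s)⁻¹) :
    (∀ t, 0 ≤ t → G t = a + ∫ s in Icc 0 t, (1 - G s) ∂A.measure) ∧
    (∀ H : ℝ → ℝ,
      (∀ t, 0 ≤ t → H t = a + ∫ s in Icc 0 t, (1 - H s) ∂A.measure) →
      ((a ≤ 1 → MonotoneOn H (Ici 0) ∧ ∀ t, 0 ≤ t → H t ≤ 1) ∧
       (1 ≤ a → AntitoneOn H (Ici 0) ∧ ∀ t, 0 ≤ t → 1 ≤ H t))) :=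
  solves_dG_eq_one_sub_G_dA_general A a Ac hAcm Δ hΔ hsum hdec G hG
end

section
/- Suppose L > F ≥ M at some time t (real numbers with L_t > F_t ≥ M_t). If both players use the extended stopping intensity α = (L_t − F_t)/(L_t − M_t) ∈ (0,1], then the resulting expected payoff μ_L(α,α)·L_t + μ_L(α,α)·F_t + μ_M(α,α)·M_t equals F_t for each player. -/
/-- Leader probability in the repeated stopping game. -/
noncomputable def muL (x y : ℝ) : ℝ := x * (1 - y) / (x + y - x * y)

/-- Simultaneous-stopping probability in the repeated stopping game. -/
noncomputable def muM (x y : ℝ) : ℝ := x * y / (x + y - x * y)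

/-!
On the diagonal the common denominator is `x + x - x * x = x (2 - x)`, so
`μ_L(α,α) = (1 - α)/(2 - α)` and `μ_M(α,α) = α/(2 - α)`. The expected payoff is then
`((1 - α)(L + F) + α M)/(2 - α)`, and the choice of `α` is exactly the relation
`α (L - M) = L - F`, which turns the numerator into `(2 - α) F`.
-/

lemma muL_self {x : ℝ} (hx : x ≠ 0) : muL x x = (1 - x) / (2 - x) := by
  have hden : x + x - x * x = x * (2 - x) := by ring
  rw [muL, hden, mul_div_mul_left _ _ hx]

lemma muM_self {x : ℝ} (hx : x ≠ 0) : muM x x = x / (2 - x) := by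
  have hden : x + x - x * x = x * (2 - x) := by ring
  rw [muM, hden, mul_div_mul_left _ _ hx]

lemma muL_self_mul_add_muL_self_mul_add_muM_self_mul {α L F M : ℝ} (hα0 : α ≠ 0)
    (hα2 : α ≠ 2) (hα : α * (L - M) = L - F) :
    muL α α * L + muL α α * F + muM α α * M = F := by
  have h2 : 2 - α ≠ 0 := sub_ne_zero.mpr (Ne.symm hα2)
  rw [muL_self hα0, muM_self hα0]
  field_simp
  linear_combination -hα

lemma div_sub_sub_mem_Ioc {L F M : ℝ} (hLF : F < L) (hFM : M ≤ F) :
    (L - F) / (L - M) ∈ Set.Ioc (0 : ℝ) 1 := by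
  have hLM : 0 < L - M := by linarith
  exact ⟨div_pos (sub_pos.mpr hLF) hLM, (div_le_one hLM).mpr (by linarith)⟩

/-- If `L > F ≥ M` and both players use the extended stopping intensity
`α = (L - F)/(L - M)`, then `α ∈ (0,1]` and each player's expected payoff
`μ_L(α,α)·L + μ_L(α,α)·F + μ_M(α,α)·M` equals `F`. -/
theorem preemption_indifference (Lt Ft Mt : ℝ) (hLF : Ft < Lt) (hFM : Mt ≤ Ft)
    (α : ℝ) (hα : α = (Lt - Ft) / (Lt - Mt)) :
    α ∈ Set.Ioc (0:ℝ) 1 ∧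
    muL α α * Lt + muL α α * Ft + muM α α * Mt = Ft := by
  have hmem : α ∈ Set.Ioc (0 : ℝ) 1 := hα ▸ div_sub_sub_mem_Ioc hLF hFM
  have hrel : α * (Lt - Mt) = Lt - Ft := by
    rw [hα, div_mul_cancel₀ _ (by linarith)]
  refine ⟨hmem, muL_self_mul_add_muL_self_mul_add_muM_self_mul hmem.1.ne' ?_ hrel⟩
  linarith [hmem.2]
end

section
/- Let r > max(μ,0), c > 0, m ≥ 1, β₂ < 0 the negative root of (1/2)σ²β(β−1) + μβ − r = 0, and y_m = (β₂/(β₂−1))((r−μ)/r)(c/m). Define v(y) = m y/(r−μ) − c/r − (y/y_m)^{β₂}(m y_m/(r−μ) − c/r) for y > y_m and v(y) = 0 for y ≤ y_m. Then v is continuous on (0,∞), v ≥ 0, and v satisfies the ODE (1/2)σ²y²v'' + μyv' − rv + (my − c) = 0 on (y_m, ∞) with value matching v(y_m) = 0 and smooth pasting v'(y_m) = 0. -/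
/-!
On `(y_m, ∞)` the function `v` is an affine particular solution `m y/(r-μ) - c/r` of the
inhomogeneous Euler equation plus a multiple of the homogeneous solution `(y/y_m)^β₂`, which
solves the homogeneous equation because `β₂` is a root of the characteristic polynomial.
The multiple is chosen to give value matching, and the choice of `y_m` is exactly what makes the
derivative `m/(r-μ) · (1 - (y/y_m)^(β₂-1))` vanish at `y_m`; the same formula shows that `v` is
nondecreasing to the right of `y_m`, hence nonnegative.
-/

open Filter Set Topology

section PowerFunction

variable {β s y : ℝ}

theorem hasDerivAt_div_rpow (hs : s ≠ 0) (hy : y ≠ 0) :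
    HasDerivAt (fun z => (z / s) ^ β) (β * (y / s) ^ β / y) y := by
  have hys : y / s ≠ 0 := div_ne_zero hy hs
  convert ((hasDerivAt_id' y).div_const s).rpow_const (p := β) (Or.inl hys) using 1
  rw [Real.rpow_sub_one hys]
  field_simp

theorem hasDerivAt_div_rpow_div_self (hs : s ≠ 0) (hy : y ≠ 0) :
    HasDerivAt (fun z => (z / s) ^ β / z) ((β - 1) * (y / s) ^ β / y ^ 2) y :=
  ((hasDerivAt_div_rpow hs hy).div (hasDerivAt_id' y) hy).congr_deriv (by field_simp)

end PowerFunction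

noncomputable def affineAddRpow (K b C s β : ℝ) (y : ℝ) : ℝ :=
  K * y + b + C * (y / s) ^ β

section AffineAddRpow

variable {K b C s β y : ℝ}

theorem affineAddRpow_self (hs : s ≠ 0) : affineAddRpow K b C s β s = K * s + b + C := by
  simp [affineAddRpow, div_self hs]

theorem hasDerivAt_affineAddRpow (hs : s ≠ 0) (hy : y ≠ 0) :
    HasDerivAt (affineAddRpow K b C s β) (K + C * β * ((y / s) ^ β / y)) y :=
  ((((hasDerivAt_id' y).const_mul K).add_const b).add
    ((hasDerivAt_div_rpow hs hy).const_mul C)).congr_deriv (by ring)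

theorem deriv_affineAddRpow_eventuallyEq (hs : s ≠ 0) (hy : y ≠ 0) :
    deriv (affineAddRpow K b C s β) =ᶠ[𝓝 y] fun z => K + C * β * ((z / s) ^ β / z) := by
  filter_upwards [isOpen_ne.mem_nhds hy] with z hz
  exact (hasDerivAt_affineAddRpow hs hz).deriv

theorem deriv_deriv_affineAddRpow (hs : s ≠ 0) (hy : y ≠ 0) :
    deriv (deriv (affineAddRpow K b C s β)) y = C * β * ((β - 1) * (y / s) ^ β / y ^ 2) := by
  rw [(deriv_affineAddRpow_eventuallyEq hs hy).deriv_eq]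
  exact (((hasDerivAt_div_rpow_div_self hs hy).const_mul (C * β)).const_add K).deriv

theorem affineAddRpow_ode {σ μ r m c : ℝ} (hroot : σ ^ 2 / 2 * (β * (β - 1)) + μ * β - r = 0)
    (hK : (μ - r) * K + m = 0) (hb : r * b + c = 0) (hs : s ≠ 0) (hy : y ≠ 0) :
    σ ^ 2 / 2 * y ^ 2 * deriv (deriv (affineAddRpow K b C s β)) y
        + μ * y * deriv (affineAddRpow K b C s β) y - r * affineAddRpow K b C s β y
        + (m * y - c) = 0 := by
  rw [deriv_deriv_affineAddRpow hs hy, (hasDerivAt_affineAddRpow hs hy).deriv, affineAddRpow]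
  field_simp
  linear_combination 2 * (C * (y / s) ^ β * hroot + y * hK - hb)

/-- Smooth pasting at `s` turns the derivative into `K (1 - (y/s)^(β-1))`. -/
theorem affineAddRpow_nonneg (hs : 0 < s) (hβ : β ≤ 1) (hK : 0 ≤ K)
    (hvalue : K * s + b + C = 0) (hpaste : K * s + C * β = 0) (hy : s ≤ y) :
    0 ≤ affineAddRpow K b C s β y := by
  have hpos : ∀ z ∈ interior (Ici s), 0 < z := fun z hz => hs.trans (by simpa using hz)
  have hmono : MonotoneOn (affineAddRpow K b C s β) (Ici s) := by
    refine monotoneOn_of_hasDerivWithinAt_nonneg (convex_Ici s) ?_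
      (fun z hz => (hasDerivAt_affineAddRpow hs.ne' (hpos z hz).ne').hasDerivWithinAt) ?_
    · exact fun z hz => (hasDerivAt_affineAddRpow hs.ne'
        (hs.trans_le hz).ne').continuousAt.continuousWithinAt
    · intro z hz
      have hzs : 1 ≤ z / s := (one_le_div hs).2 (interior_subset hz)
      have hderiv : K + C * β * ((z / s) ^ β / z) = K * (1 - (z / s) ^ (β - 1)) := by
        rw [Real.rpow_sub_one (div_pos (hpos z hz) hs).ne', div_div_eq_mul_div,
          show C * β = -(K * s) by linarith]
        ring
      rw [hderiv]
      exact mul_nonneg hK (sub_nonneg.2 (Real.rpow_le_one_of_one_le_of_nonpos hzs (by linarith)))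
  simpa [affineAddRpow_self hs.ne', hvalue] using hmono self_mem_Ici hy hy

end AffineAddRpow

section Pasting

variable {v f : ℝ → ℝ} {s : ℝ}

theorem hasDerivAt_zero_of_paste (hf : HasDerivAt f 0 s) (hfs : f s = 0)
    (hle : ∀ y ≤ s, v y = 0) (hgt : ∀ y, s < y → v y = f y) : HasDerivAt v 0 s := by
  have hright : HasDerivWithinAt v 0 (Ici s) s := by
    refine hf.hasDerivWithinAt.congr (fun z hz => ?_) (by rw [hle s le_rfl, hfs])
    rcases (mem_Ici.1 hz).eq_or_lt with h | h
    · rw [← h, hle s le_rfl, hfs]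
    · exact hgt z h
  have hleft : HasDerivWithinAt v 0 (Iic s) s :=
    (hasDerivWithinAt_const s _ 0).congr hle (hle s le_rfl)
  simpa only [Iic_union_Ici, hasDerivWithinAt_univ] using hleft.union hright

theorem continuous_of_paste (hf : ContinuousOn f (Ioi s)) (hs : ContinuousAt v s)
    (hle : ∀ y ≤ s, v y = 0) (hgt : ∀ y, s < y → v y = f y) : Continuous v := by
  refine continuous_iff_continuousAt.2 fun y => ?_
  rcases lt_trichotomy y s with h | rfl | h
  · refine (continuousAt_const (y := (0 : ℝ))).congr ?_
    filter_upwards [Iio_mem_nhds h] with z hz using (hle z hz.le).symm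
  · exact hs
  · refine (hf.continuousAt (Ioi_mem_nhds h)).congr ?_
    filter_upwards [Ioi_mem_nhds h] with z hz using (hgt z hz).symm

end Pasting

/-- The threshold `y_m` is the root of the smooth-pasting condition `v'(y_m) = 0`. -/
theorem smooth_pasting_of_threshold {r μ c m β ym : ℝ} (hr : r ≠ 0) (hrμ : r - μ ≠ 0)
    (hm : m ≠ 0) (hβ : β ≠ 1) (hym : ym = β / (β - 1) * ((r - μ) / r) * (c / m)) :
    m / (r - μ) * ym + -(m * ym / (r - μ) - c / r) * β = 0 := by
  have : β - 1 ≠ 0 := sub_ne_zero.2 hβ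
  subst hym
  field_simp
  ring

theorem value_function_properties_general (r μ σ c m β₂ : ℝ) (hr : r > max μ 0)
    (hc : 0 < c) (hm : 1 ≤ m) (hβ : β₂ < 0)
    (hroot : σ ^ 2 / 2 * (β₂ * (β₂ - 1)) + μ * β₂ - r = 0)
    (ym : ℝ) (hym : ym = β₂ / (β₂ - 1) * ((r - μ) / r) * (c / m))
    (v : ℝ → ℝ)
    (hv : ∀ y : ℝ, v y = if ym < y then
        m * y / (r - μ) - c / r - (y / ym) ^ β₂ * (m * ym / (r - μ) - c / r) else 0) :
    ContinuousOn v (Set.Ioi 0) ∧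
    (∀ y ∈ Set.Ioi (0:ℝ), 0 ≤ v y) ∧
    (∀ y ∈ Set.Ioi ym,
      σ ^ 2 / 2 * y ^ 2 * deriv (deriv v) y + μ * y * deriv v y - r * v y + (m * y - c) = 0) ∧
    v ym = 0 ∧ deriv v ym = 0 := by
  obtain ⟨hμr, hr0⟩ := max_lt_iff.1 hr
  have hrμ : 0 < r - μ := sub_pos.2 hμr
  have hm0 : 0 < m := by linarith
  have hym0 : 0 < ym := hym ▸ mul_pos (mul_pos (div_pos_of_neg_of_neg hβ (by linarith))
    (div_pos hrμ hr0)) (div_pos hc hm0)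
  set K := m / (r - μ)
  set C := -(m * ym / (r - μ) - c / r)
  set f := affineAddRpow K (-(c / r)) C ym β₂
  have hvalue : K * ym + -(c / r) + C = 0 := by ring
  have hpaste : K * ym + C * β₂ = 0 :=
    smooth_pasting_of_threshold hr0.ne' hrμ.ne' hm0.ne' (by linarith) hym
  have hgt : ∀ y, ym < y → v y = f y := fun y hy => by
    rw [hv, if_pos hy]
    simp only [f, K, C, affineAddRpow]
    ring
  have hle : ∀ y ≤ ym, v y = 0 := fun y hy => by rw [hv, if_neg hy.not_gt]
  have hf_ym : HasDerivAt f 0 ym := by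
    convert hasDerivAt_affineAddRpow hym0.ne' hym0.ne' using 1
    rw [div_self hym0.ne', Real.one_rpow]
    field_simp
    linear_combination -hpaste
  have hv_ym : HasDerivAt v 0 ym :=
    hasDerivAt_zero_of_paste hf_ym ((affineAddRpow_self hym0.ne').trans hvalue) hle hgt
  refine ⟨?_, fun y _ => ?_, fun y hy => ?_, hle ym le_rfl, hv_ym.deriv⟩
  · refine (continuous_of_paste (fun y hy => ?_) hv_ym.continuousAt hle hgt).continuousOn
    exact (hasDerivAt_affineAddRpow hym0.ne' (hym0.trans hy).ne').continuousAt.continuousWithinAt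
  · rcases le_or_gt y ym with h | h
    · rw [hle y h]
    · rw [hgt y h]
      exact affineAddRpow_nonneg hym0 (by linarith) (div_pos hm0 hrμ).le hvalue hpaste h.le
  · have hvf : v =ᶠ[𝓝 y] f := by filter_upwards [Ioi_mem_nhds hy] with z hz using hgt z hz
    rw [hvf.deriv.deriv_eq, hvf.deriv_eq, hvf.eq_of_nhds]
    refine affineAddRpow_ode hroot ?_ ?_ hym0.ne' (hym0.trans hy).ne'
    · simp only [K]; field_simp; ring
    · field_simp; ring

/-- The value function of the monopolist's optimal exit problem: it is continuous on
`(0,∞)`, nonnegative, satisfies the ODE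
`(1/2)σ²y²v'' + μyv' - rv + (my - c) = 0` on `(y_m, ∞)`, with value matching
`v(y_m) = 0` and smooth pasting `v'(y_m) = 0`. -/
theorem value_function_properties (r μ σ c m β₂ : ℝ) (hr : r > max μ 0) (hσ : 0 < σ)
    (hc : 0 < c) (hm : 1 ≤ m) (hβ : β₂ < 0)
    (hroot : σ ^ 2 / 2 * (β₂ * (β₂ - 1)) + μ * β₂ - r = 0)
    (ym : ℝ) (hym : ym = β₂ / (β₂ - 1) * ((r - μ) / r) * (c / m))
    (v : ℝ → ℝ)
    (hv : ∀ y : ℝ, v y = if ym < y then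
        m * y / (r - μ) - c / r - (y / ym) ^ β₂ * (m * ym / (r - μ) - c / r) else 0) :
    ContinuousOn v (Set.Ioi 0) ∧
    (∀ y ∈ Set.Ioi (0:ℝ), 0 ≤ v y) ∧
    (∀ y ∈ Set.Ioi ym,
      σ ^ 2 / 2 * y ^ 2 * deriv (deriv v) y + μ * y * deriv v y - r * v y + (m * y - c) = 0) ∧
    v ym = 0 ∧ deriv v ym = 0 :=
  value_function_properties_general r μ σ c m β₂ hr hc hm hβ hroot ym hym v hv
end

section
/- Let L be a measurable real-valued process such that K := sup{E[|L_τ| 1_{τ<∞}] : τ a stopping time} < ∞, and let G be an a.s. right-continuous nondecreasing adapted process with 0 ≤ G ≤ 1. Then for any random times 0 ≤ a ≤ b ≤ ∞, E[∫_{[a,b)} |L_t| dG_t] ≤ K, and the pathwise integral ∫_{[a,b)} |L_t| dG_t is a.s. finite, where the integral is computed by the change of variable ∫_{[a,b)} |L_t| dG_t = ∫_0^1 |L_{τ^G(x)}| 1_{τ^G(x) ∈ [a,b)} dx with τ^G(x) = inf{t : G_t ≥ x}. -/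
open MeasureTheory Set
open scoped NNReal ENNReal Topology

/-- A stopping time possibly taking the value `+∞`, for a filtration indexed by `ℝ≥0`. -/
def IsStoppingTimeE {Ω : Type*} {m : MeasurableSpace Ω} (ℱ : Filtration ℝ≥0 m)
    (τ : Ω → ℝ≥0∞) : Prop :=
  ∀ u : ℝ≥0, MeasurableSet[ℱ u] {ω | τ ω ≤ (u : ℝ≥0∞)}

/-- The pathwise left-continuous inverse `τ^G(x)(ω) = inf{t ≥ 0 : G_t(ω) ≥ x}`. -/
noncomputable def tauG {Ω : Type*} (G : ℝ≥0 → Ω → ℝ) (ω : Ω) (x : ℝ) : ℝ≥0∞ :=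
  ⨅ t : {t : ℝ≥0 // x ≤ G t ω}, ((t.1 : ℝ≥0∞))

/-!
Each level `x` gives a stopping time `τ^G(x)`, since `{τ^G(x) ≤ u} = {G_u ≥ x}` by right
continuity. Dropping the constraint `τ^G(x) ∈ [a, b)` only enlarges the integrand, and by Tonelli
the expectation of `∫_0^1 |L_{τ^G(x)}| 1_{τ^G(x) < ∞} dx` is the average over `x ∈ (0, 1]` of
`E[|L_{τ^G(x)}| 1_{τ^G(x) < ∞}] ≤ K`.
-/

section

variable {Ω : Type*} {m : MeasurableSpace Ω}

noncomputable def absStoppedValue (L : ℝ≥0 → Ω → ℝ) (τ : Ω → ℝ≥0∞) (ω : Ω) : ℝ≥0∞ :=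
  {ω | τ ω < ⊤}.indicator (fun ω => ENNReal.ofReal |L (τ ω).toNNReal ω|) ω

theorem tauG_le_coe_iff {G : ℝ≥0 → Ω → ℝ} {ω : Ω} (hmono : Monotone fun t => G t ω)
    (hrc : ∀ t, ContinuousWithinAt (fun s => G s ω) (Ici t) t) (x : ℝ) (u : ℝ≥0) :
    tauG G ω x ≤ u ↔ x ≤ G u ω := by
  refine ⟨fun h => ?_, fun h => iInf_le_of_le ⟨u, h⟩ le_rfl⟩
  have hright : ∀ s : ℝ≥0, u < s → x ≤ G s ω := fun s hs => by
    obtain ⟨⟨t, ht⟩, hts⟩ := iInf_lt_iff.mp (h.trans_lt (ENNReal.coe_lt_coe.mpr hs))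
    exact ht.trans (hmono (ENNReal.coe_le_coe.mp hts.le))
  exact ge_of_tendsto ((hrc u).mono_left (nhdsWithin_mono _ Ioi_subset_Ici_self))
    (eventually_nhdsWithin_of_forall hright)

theorem measurable_tauG {G : ℝ≥0 → Ω → ℝ} (hG : ∀ t, Measurable (G t))
    (hmono : ∀ ω, Monotone fun t => G t ω)
    (hrc : ∀ ω t, ContinuousWithinAt (fun s => G s ω) (Ici t) t) :
    Measurable fun p : Ω × ℝ => tauG G p.1 p.2 := by
  refine measurable_of_Iic fun u => ?_
  induction u using ENNReal.recTopCoe with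
  | top => simp
  | coe u =>
    have hpre : (fun p : Ω × ℝ => tauG G p.1 p.2) ⁻¹' Iic (u : ℝ≥0∞)
        = {p | p.2 ≤ G u p.1} := by
      ext p
      exact tauG_le_coe_iff (hmono p.1) (hrc p.1) p.2 u
    rw [hpre]
    exact measurableSet_le measurable_snd ((hG u).comp measurable_fst)

theorem isStoppingTimeE_tauG {ℱ : Filtration ℝ≥0 m} {G : ℝ≥0 → Ω → ℝ}
    (hG : Adapted ℱ fun t => G t) (hmono : ∀ ω, Monotone fun t => G t ω)
    (hrc : ∀ ω t, ContinuousWithinAt (fun s => G s ω) (Ici t) t) (x : ℝ) :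
    IsStoppingTimeE ℱ fun ω => tauG G ω x := fun u => by
  have hpre : {ω | tauG G ω x ≤ u} = G u ⁻¹' Ici x := by
    ext ω
    exact tauG_le_coe_iff (hmono ω) (hrc ω) x u
  rw [hpre]
  exact hG u measurableSet_Ici

theorem measurable_absStoppedValue_uncurry {X : Type*} [MeasurableSpace X]
    {L : ℝ≥0 → Ω → ℝ} (hL : Measurable (Function.uncurry L)) {τ : X → Ω → ℝ≥0∞}
    (hτ : Measurable fun p : Ω × X => τ p.2 p.1) :
    Measurable fun p : Ω × X => absStoppedValue L (τ p.2) p.1 :=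
  (ENNReal.measurable_ofReal.comp (continuous_abs.measurable.comp
    (hL.comp ((ENNReal.measurable_toNNReal.comp hτ).prodMk measurable_fst)))).indicator
    (hτ measurableSet_Iio)

theorem lintegral_lintegral_le_of_forall_lintegral_le {X : Type*} [MeasurableSpace X]
    {P : Measure Ω} {ν : Measure X} [SFinite P] [SFinite ν] {F : Ω × X → ℝ≥0∞}
    (hF : Measurable F) {c : ℝ≥0∞} (h : ∀ x, ∫⁻ ω, F (ω, x) ∂P ≤ c) :
    ∫⁻ ω, ∫⁻ x, F (ω, x) ∂ν ∂P ≤ ν univ * c := calc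
  ∫⁻ ω, ∫⁻ x, F (ω, x) ∂ν ∂P = ∫⁻ x, ∫⁻ ω, F (ω, x) ∂P ∂ν :=
    lintegral_lintegral_swap hF.aemeasurable
  _ ≤ ∫⁻ _, c ∂ν := lintegral_mono h
  _ = ν univ * c := by rw [lintegral_const, mul_comm]

end

theorem integral_L_dG_bounded_general {Ω : Type*} {m : MeasurableSpace Ω}
    (ℱ : Filtration ℝ≥0 m) (P : Measure Ω) [IsProbabilityMeasure P]
    (L : ℝ≥0 → Ω → ℝ) (hL : Measurable (Function.uncurry L))
    (K : ℝ)
    (hK : ∀ τ : Ω → ℝ≥0∞, IsStoppingTimeE ℱ τ →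
      ∫⁻ ω, Set.indicator {ω | τ ω < ⊤}
        (fun ω => ENNReal.ofReal |L (τ ω).toNNReal ω|) ω ∂P ≤ ENNReal.ofReal K)
    (G : ℝ≥0 → Ω → ℝ) (hGadapted : Adapted ℱ fun t => G t)
    (hGmono : ∀ ω, Monotone fun t => G t ω)
    (hGrc : ∀ ω (t : ℝ≥0), ContinuousWithinAt (fun s => G s ω) (Ici t) t)
    (a b : Ω → ℝ≥0∞)
    (I : Ω → ℝ≥0∞)
    (hI : ∀ ω, I ω = ∫⁻ x in Ioc (0:ℝ) 1,
      Set.indicator {x | a ω ≤ tauG G ω x ∧ tauG G ω x < b ω ∧ tauG G ω x < ⊤}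
        (fun x => ENNReal.ofReal |L (tauG G ω x).toNNReal ω|) x) :
    (∫⁻ ω, I ω ∂P ≤ ENNReal.ofReal K) ∧ ∀ᵐ ω ∂P, I ω < ⊤ := by
  set J : Ω → ℝ≥0∞ := fun ω =>
    ∫⁻ x in Ioc (0:ℝ) 1, absStoppedValue L (fun ω => tauG G ω x) ω
  have hIJ : ∀ ω, I ω ≤ J ω := fun ω => (hI ω).trans_le <| lintegral_mono fun x =>
    show _ ≤ {x | tauG G ω x < ⊤}.indicator _ x from
      indicator_le_indicator_of_subset (fun _ hx => hx.2.2) (fun _ => zero_le) x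
  have hF := measurable_absStoppedValue_uncurry hL (τ := fun x ω => tauG G ω x)
    (measurable_tauG (G := G) (fun t => (hGadapted t).mono (ℱ.le t) le_rfl) hGmono hGrc)
  have hJK : ∫⁻ ω, J ω ∂P ≤ ENNReal.ofReal K := by
    have := lintegral_lintegral_le_of_forall_lintegral_le hF
      (ν := volume.restrict (Ioc (0:ℝ) 1))
      fun x => hK _ (isStoppingTimeE_tauG hGadapted hGmono hGrc x)
    simpa [Real.volume_Ioc] using this
  refine ⟨(lintegral_mono hIJ).trans hJK, ?_⟩
  filter_upwards [ae_lt_top hF.lintegral_prod_right' (hJK.trans_lt ENNReal.ofReal_lt_top).ne]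
    with ω hω
  exact (hIJ ω).trans_lt hω

/-- If `K` bounds `E[|L_τ| 1_{τ<∞}]` over all stopping times and `G` is a right-continuous
nondecreasing adapted process with values in `[0,1]`, then for random times `a ≤ b`, the
pathwise integral `∫_{[a,b)} |L_t| dG_t`, computed by the change of variable
`∫_0^1 |L_{τ^G(x)}| 1_{τ^G(x) ∈ [a,b)} dx`, has expectation at most `K` and is a.s. finite. -/
theorem integral_L_dG_bounded {Ω : Type*} {m : MeasurableSpace Ω}
    (ℱ : Filtration ℝ≥0 m) (P : Measure Ω) [IsProbabilityMeasure P]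
    (L : ℝ≥0 → Ω → ℝ) (hL : Measurable (Function.uncurry L))
    (K : ℝ)
    (hK : ∀ τ : Ω → ℝ≥0∞, IsStoppingTimeE ℱ τ →
      ∫⁻ ω, Set.indicator {ω | τ ω < ⊤}
        (fun ω => ENNReal.ofReal |L (τ ω).toNNReal ω|) ω ∂P ≤ ENNReal.ofReal K)
    (G : ℝ≥0 → Ω → ℝ) (hGadapted : Adapted ℱ fun t => G t)
    (hGmono : ∀ ω, Monotone fun t => G t ω)
    (hGrc : ∀ ω (t : ℝ≥0), ContinuousWithinAt (fun s => G s ω) (Ici t) t)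
    (hG01 : ∀ (t : ℝ≥0) ω, G t ω ∈ Icc (0:ℝ) 1)
    (a b : Ω → ℝ≥0∞) (hab : ∀ ω, a ω ≤ b ω)
    (I : Ω → ℝ≥0∞)
    (hI : ∀ ω, I ω = ∫⁻ x in Ioc (0:ℝ) 1,
      Set.indicator {x | a ω ≤ tauG G ω x ∧ tauG G ω x < b ω ∧ tauG G ω x < ⊤}
        (fun x => ENNReal.ofReal |L (tauG G ω x).toNNReal ω|) x) :
    (∫⁻ ω, I ω ∂P ≤ ENNReal.ofReal K) ∧ ∀ᵐ ω ∂P, I ω < ⊤ :=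
  integral_L_dG_bounded_general ℱ P L hL K hK G hGadapted hGmono hGrc a b I hI
end

section
/- In the deterministic two-player timing game with continuous payoff functions L, F, M : ℝ≥0 → ℝ satisfying F ≥ L ≥ M, suppose the follower payoff F is nonincreasing (deterministic supermartingale). Let τ_L = inf{t ≥ ϑ : U_L(t) = L(t)} where U_L(t) = sup_{s ≥ t} L(s) is the deterministic Snell envelope of L. Then for any nondecreasing right-continuous G_j : ℝ≥0 → [0,1] (opponent distribution) and any time t_i ∈ [ϑ, τ_L), the payoff from stopping at τ_L (weakly) exceeds the payoff from stopping at t_i: ∫_{[t_i, τ_L]} F dG_j + (1−G_j(τ_L)) L(τ_L) ≥ ΔG_j(t_i) M(t_i) + (1−G_j(t_i)) L(t_i). -/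
open MeasureTheory Set

/-!
The sup of `L` over `[τ_L, ∞)` is attained at `τ_L`, so a maximiser `t'` of the continuous `L` on
the compact `[t_i, τ_L]` maximises `L` on all of `[t_i, ∞)`; minimality of `τ_L` forces
`t' = τ_L`, hence `L t_i ≤ L τ_L`. As `F` is nonincreasing and `F ≥ L`, the integral of `F` over
`[t_i, τ_L]` is at least `L τ_L` times the mass `G(τ_L) - G(t_i-)`, while `M ≤ L` bounds the
left-hand side by `(1 - G(t_i-)) L t_i ≤ (1 - G(t_i-)) L τ_L`.
-/

lemma sSup_image_Ici_eq_of_isMaxOn {L : ℝ → ℝ} {t : ℝ} (h : IsMaxOn L (Ici t) t) :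
    sSup (L '' Ici t) = L t :=
  IsGreatest.csSup_eq ⟨mem_image_of_mem L self_mem_Ici, by
    rintro _ ⟨s, hs, rfl⟩
    exact h hs⟩

lemma isMaxOn_Ici_of_sSup_image_Ici_eq {L : ℝ → ℝ} {t : ℝ} (hbdd : BddAbove (L '' Ici t))
    (h : sSup (L '' Ici t) = L t) : IsMaxOn L (Ici t) t := fun _ hs =>
  h ▸ le_csSup hbdd (mem_image_of_mem L hs)

lemma isMaxOn_Ici_of_isMaxOn_Ici_of_minimal {L : ℝ → ℝ} {a τ : ℝ}
    (hL : ContinuousOn L (Icc a τ)) (haτ : a ≤ τ) (hτ : IsMaxOn L (Ici τ) τ)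
    (hmin : ∀ t ∈ Icc a τ, IsMaxOn L (Ici t) t → τ ≤ t) : IsMaxOn L (Ici a) τ := by
  obtain ⟨t', ht', hmax⟩ := isCompact_Icc.exists_isMaxOn (nonempty_Icc.2 haτ) hL
  have hmax_Ici : IsMaxOn L (Ici a) t' := by
    intro s (hs : a ≤ s)
    rcases le_total s τ with hsτ | hτs
    · exact hmax ⟨hs, hsτ⟩
    · exact (show L s ≤ L τ from hτ hτs).trans (hmax ⟨haτ, le_rfl⟩)
  have ht'τ : t' = τ :=
    le_antisymm ht'.2 (hmin t' ht' (hmax_Ici.on_subset (Ici_subset_Ici.2 ht'.1)))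
  exact ht'τ ▸ hmax_Ici

lemma StieltjesFunction.mul_sub_leftLim_le_setIntegral_Icc (G : StieltjesFunction ℝ)
    {F : ℝ → ℝ} {a b c : ℝ} (hab : a ≤ b) (hF : AntitoneOn F (Icc a b)) (hc : c ≤ F b) :
    c * (G b - Function.leftLim G a) ≤ ∫ s in Icc a b, F s ∂G.measure := by
  have hmass : G.measure.real (Icc a b) = G b - Function.leftLim G a := by
    rw [measureReal_def, G.measure_Icc, ENNReal.toReal_ofReal]
    exact sub_nonneg.2 (G.mono.leftLim_le hab)
  rw [← hmass]
  exact setIntegral_ge_of_const_le_real measurableSet_Icc measure_Icc_lt_top.ne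
    (fun s hs => hc.trans (hF hs ⟨hab, le_rfl⟩ hs.2)) (hF.integrableOn_isCompact isCompact_Icc)

theorem stop_at_tauL_dominates_general (L F M : ℝ → ℝ)
    (hLc : Continuous L)
    (hFL : ∀ t, L t ≤ F t) (hLM : ∀ t, M t ≤ L t)
    (hFanti : Antitone F)
    (hLbdd : BddAbove (Set.range L))
    (ϑ : ℝ)
    (τL : ℝ)
    (hτL2 : sSup (L '' Ici τL) = L τL)
    (hτL3 : ∀ t, ϑ ≤ t → sSup (L '' Ici t) = L t → τL ≤ t)
    (Gj : StieltjesFunction ℝ) (hGj01 : ∀ t : ℝ, Gj t ∈ Icc (0:ℝ) 1) :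
    ∀ ti, ϑ ≤ ti → ti < τL →
      (Gj ti - Function.leftLim Gj ti) * M ti + (1 - Gj ti) * L ti ≤
      (∫ s in Icc ti τL, F s ∂Gj.measure) + (1 - Gj τL) * L τL := by
  intro ti hti htiτ
  have hLti : L ti ≤ L τL :=
    isMaxOn_Ici_of_isMaxOn_Ici_of_minimal hLc.continuousOn htiτ.le
      (isMaxOn_Ici_of_sSup_image_Ici_eq (hLbdd.mono (image_subset_range _ _)) hτL2)
      (fun t ht hmax => hτL3 t (hti.trans ht.1) (sSup_image_Ici_eq_of_isMaxOn hmax))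
      self_mem_Ici
  have hint : L τL * (Gj τL - Function.leftLim Gj ti) ≤ ∫ s in Icc ti τL, F s ∂Gj.measure :=
    Gj.mul_sub_leftLim_le_setIntegral_Icc htiτ.le (hFanti.antitoneOn _) (hFL τL)
  have hjump : 0 ≤ Gj ti - Function.leftLim Gj ti := sub_nonneg.2 (Gj.mono.leftLim_le le_rfl)
  have hGti : Gj ti ≤ 1 := (hGj01 ti).2
  calc (Gj ti - Function.leftLim Gj ti) * M ti + (1 - Gj ti) * L ti
      ≤ (1 - Function.leftLim Gj ti) * L ti := by
        linarith [mul_le_mul_of_nonneg_left (hLM ti) hjump]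
    _ ≤ (1 - Function.leftLim Gj ti) * L τL := by gcongr; linarith
    _ = L τL * (Gj τL - Function.leftLim Gj ti) + (1 - Gj τL) * L τL := by ring
    _ ≤ _ := by gcongr

/-- Deterministic specialization of the dominance lemma: with continuous payoffs
`F ≥ L ≥ M`, `F` nonincreasing, and `τ_L` the first time after `ϑ` where the deterministic
Snell envelope `U_L(t) = sup_{s ≥ t} L(s)` meets `L`, stopping at `τ_L` (weakly) dominates
stopping at any earlier `t_i ∈ [ϑ, τ_L)` against any opponent distribution `G_j`. -/
theorem stop_at_tauL_dominates (L F M : ℝ → ℝ)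
    (hLc : Continuous L) (hFc : Continuous F) (hMc : Continuous M)
    (hFL : ∀ t, L t ≤ F t) (hLM : ∀ t, M t ≤ L t)
    (hFanti : Antitone F)
    (hLbdd : BddAbove (Set.range L))
    (ϑ : ℝ) (hϑ : 0 ≤ ϑ)
    (τL : ℝ) (hτL1 : ϑ ≤ τL)
    (hτL2 : sSup (L '' Ici τL) = L τL)
    (hτL3 : ∀ t, ϑ ≤ t → sSup (L '' Ici t) = L t → τL ≤ t)
    (Gj : StieltjesFunction ℝ) (hGj01 : ∀ t : ℝ, Gj t ∈ Icc (0:ℝ) 1) :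
    ∀ ti, ϑ ≤ ti → ti < τL →
      (Gj ti - Function.leftLim Gj ti) * M ti + (1 - Gj ti) * L ti ≤
      (∫ s in Icc ti τL, F s ∂Gj.measure) + (1 - Gj τL) * L τL :=
  stop_at_tauL_dominates_general L F M hLc hFL hLM hFanti hLbdd ϑ τL hτL2 hτL3 Gj hGj01
end
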